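/- Let G be a 2-edge-colored simple graph with colors R, B containing no non-monochromatic triangle and no properly-colored 4-cycle, and let S1, S2 be disjoint seagulls with exactly 6 edges between them. Then the induced 2-edge-colored subgraph G[S1 ∪ S2] is isomorphic (as a colored graph, up to swapping colors) to H_2. -/
import Mathlib

/-- The graph `H_m` (with `|X0| = a` in general). `HGraph 2 2` is `H_2`. -/
def HGraph (a m : ℕ) : SimpleGraph (Fin a ⊕ (Fin m ⊕ Fin m)) :=
  SimpleGraph.fromRel (fun x y =>
    match x, y with
    | Sum.inl _, Sum.inr _ => True
    | Sum.inr _, Sum.inl _ => True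
    | Sum.inr (Sum.inl _), Sum.inr (Sum.inl _) => True
    | Sum.inr (Sum.inr _), Sum.inr (Sum.inr _) => True
    | _, _ => False)

def inX1 {a m : ℕ} (v : Fin a ⊕ (Fin m ⊕ Fin m)) : Prop :=
  ∃ i : Fin m, v = Sum.inr (Sum.inl i)

def inX2 {a m : ℕ} (v : Fin a ⊕ (Fin m ⊕ Fin m)) : Prop :=
  ∃ i : Fin m, v = Sum.inr (Sum.inr i)

local instance instDecImpAux {p q : Prop} [Decidable p] [Decidable q] : Decidable (p → q) :=
  if hp : p then
    (if hq : q then .isTrue (fun _ => hq) else .isFalse (fun h => hq (h hp)))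
  else .isTrue (fun h => absurd h hp)

set_option maxHeartbeats 4000000 in
set_option synthInstance.maxSize 100000 in
set_option synthInstance.maxHeartbeats 1000000 in
theorem brute : ∀ a b c d e f g h i : Fin 3,
    (if a = 0 then (0:Nat) else 1) + (if b = 0 then 0 else 1) + (if c = 0 then 0 else 1) + (if d = 0 then 0 else 1) + (if e = 0 then 0 else 1) + (if f = 0 then 0 else 1) + (if g = 0 then 0 else 1) + (if h = 0 then 0 else 1) + (if i = 0 then 0 else 1) = 6 →
    (1 ≠ 0 → d ≠ 0 → a ≠ 0 → (1 = d ∧ d = a)) →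
    (1 ≠ 0 → e ≠ 0 → b ≠ 0 → (1 = e ∧ e = b)) →
    (1 ≠ 0 → f ≠ 0 → c ≠ 0 → (1 = f ∧ f = c)) →
    (a ≠ 0 → 1 ≠ 0 → b ≠ 0 → (a = 1 ∧ 1 = b)) →
    (b ≠ 0 → 2 ≠ 0 → c ≠ 0 → (b = 2 ∧ 2 = c)) →
    (2 ≠ 0 → g ≠ 0 → d ≠ 0 → (2 = g ∧ g = d)) →
    (2 ≠ 0 → h ≠ 0 → e ≠ 0 → (2 = h ∧ h = e)) →
    (2 ≠ 0 → i ≠ 0 → f ≠ 0 → (2 = i ∧ i = f)) →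
    (d ≠ 0 → 1 ≠ 0 → e ≠ 0 → (d = 1 ∧ 1 = e)) →
    (e ≠ 0 → 2 ≠ 0 → f ≠ 0 → (e = 2 ∧ 2 = f)) →
    (g ≠ 0 → 1 ≠ 0 → h ≠ 0 → (g = 1 ∧ 1 = h)) →
    (h ≠ 0 → 2 ≠ 0 → i ≠ 0 → (h = 2 ∧ 2 = i)) →
    (a = 1 ∧ b = 1 ∧ c = 0 ∧ d = 1 ∧ e = 0 ∧ f = 2 ∧ g = 0 ∧ h = 2 ∧ i = 2) := by decide

lemma card3_ne {α : Type*} [DecidableEq α] {a b c : α}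
    (h : ({a, b, c} : Finset α).card = 3) : a ≠ b ∧ a ≠ c ∧ b ≠ c := by
  refine ⟨?_, ?_, ?_⟩ <;> rintro rfl
  · have hsub : ({a, a, c} : Finset α) ⊆ {a, c} := by intro x hx; simpa using hx
    have h1 := Finset.card_le_card hsub
    have h2 := Finset.card_insert_le a ({c} : Finset α)
    simp only [Finset.card_singleton] at h2
    omega
  · have hsub : ({a, b, a} : Finset α) ⊆ {a, b} := by
      intro x hx; simp at hx ⊢; tauto
    have h1 := Finset.card_le_card hsub
    have h2 := Finset.card_insert_le a ({b} : Finset α)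
    simp only [Finset.card_singleton] at h2
    omega
  · have hsub : ({a, b, b} : Finset α) ⊆ {a, b} := by
      intro x hx; simp at hx ⊢; tauto
    have h1 := Finset.card_le_card hsub
    have h2 := Finset.card_insert_le a ({b} : Finset α)
    simp only [Finset.card_singleton] at h2
    omega

set_option maxHeartbeats 3200000 in
open scoped Classical in
/-- If two disjoint seagulls have exactly 6 edges between them, the induced coloured
subgraph on their union is isomorphic (up to swapping colours) to `H_2`. -/
theorem six_edges_forces_H2 {V : Type*} [DecidableEq V]
    (G : SimpleGraph V) (R B : Set (Sym2 V))
    (hU : R ∪ B = G.edgeSet) (hd : Disjoint R B)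
    (hNoNM : ∀ a b c : V, G.Adj a b → G.Adj b c → G.Adj a c →
      (s(a, b) ∈ R ∧ s(b, c) ∈ R ∧ s(a, c) ∈ R) ∨
      (s(a, b) ∈ B ∧ s(b, c) ∈ B ∧ s(a, c) ∈ B))
    (hNoAlt : ¬ ∃ a b c d : V, a ≠ b ∧ a ≠ c ∧ a ≠ d ∧ b ≠ c ∧ b ≠ d ∧ c ≠ d ∧
      s(a, b) ∈ R ∧ s(b, c) ∈ B ∧ s(c, d) ∈ R ∧ s(d, a) ∈ B)
    (x1 y1 z1 x2 y2 z2 : V)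
    (hdisj : ({x1, y1, z1} : Finset V) ∩ ({x2, y2, z2} : Finset V) = ∅)
    (hcard1 : ({x1, y1, z1} : Finset V).card = 3)
    (hcard2 : ({x2, y2, z2} : Finset V).card = 3)
    (h1R : s(x1, y1) ∈ R) (h1B : s(y1, z1) ∈ B)
    (h2R : s(x2, y2) ∈ R) (h2B : s(y2, z2) ∈ B)
    (h6 : ((({x1, y1, z1} : Finset V) ×ˢ ({x2, y2, z2} : Finset V)).filter
        (fun p : V × V => G.Adj p.1 p.2)).card = 6) :
    ∃ f : V → (Fin 2 ⊕ (Fin 2 ⊕ Fin 2)),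
      Set.InjOn f ↑({x1, y1, z1, x2, y2, z2} : Finset V) ∧
      (∀ u ∈ ({x1, y1, z1, x2, y2, z2} : Finset V),
        ∀ v ∈ ({x1, y1, z1, x2, y2, z2} : Finset V),
          (G.Adj u v ↔ (HGraph 2 2).Adj (f u) (f v))) ∧
      ((∀ u ∈ ({x1, y1, z1, x2, y2, z2} : Finset V),
          ∀ v ∈ ({x1, y1, z1, x2, y2, z2} : Finset V), G.Adj u v →
            (s(u, v) ∈ R ↔ (inX1 (f u) ∨ inX1 (f v)))) ∨
       (∀ u ∈ ({x1, y1, z1, x2, y2, z2} : Finset V),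
          ∀ v ∈ ({x1, y1, z1, x2, y2, z2} : Finset V), G.Adj u v →
            (s(u, v) ∈ R ↔ (inX2 (f u) ∨ inX2 (f v))))) := by
  classical
  -- distinctness
  obtain ⟨n11, n12, n13⟩ := card3_ne hcard1   -- x1≠y1, x1≠z1, y1≠z1
  obtain ⟨n21, n22, n23⟩ := card3_ne hcard2
  have hsep : ∀ u v : V, u ∈ ({x1, y1, z1} : Finset V) →
      v ∈ ({x2, y2, z2} : Finset V) → u ≠ v := by
    intro u v hu hv heq
    subst heq
    have : u ∈ ({x1, y1, z1} : Finset V) ∩ ({x2, y2, z2} : Finset V) :=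
      Finset.mem_inter.mpr ⟨hu, hv⟩
    rw [hdisj] at this
    exact absurd this (Finset.notMem_empty u)
  have m1 : x1 ∈ ({x1, y1, z1} : Finset V) := by simp
  have m2 : y1 ∈ ({x1, y1, z1} : Finset V) := by simp
  have m3 : z1 ∈ ({x1, y1, z1} : Finset V) := by simp
  have m4 : x2 ∈ ({x2, y2, z2} : Finset V) := by simp
  have m5 : y2 ∈ ({x2, y2, z2} : Finset V) := by simp
  have m6 : z2 ∈ ({x2, y2, z2} : Finset V) := by simp
  have q11 : x1 ≠ x2 := hsep _ _ m1 m4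
  have q12 : x1 ≠ y2 := hsep _ _ m1 m5
  have q13 : x1 ≠ z2 := hsep _ _ m1 m6
  have q21 : y1 ≠ x2 := hsep _ _ m2 m4
  have q22 : y1 ≠ y2 := hsep _ _ m2 m5
  have q23 : y1 ≠ z2 := hsep _ _ m2 m6
  have q31 : z1 ≠ x2 := hsep _ _ m3 m4
  have q32 : z1 ≠ y2 := hsep _ _ m3 m5
  have q33 : z1 ≠ z2 := hsep _ _ m3 m6
  -- adjacency from colour membership
  have adjR : ∀ {u v : V}, s(u, v) ∈ R → G.Adj u v := by
    intro u v h
    rw [← SimpleGraph.mem_edgeSet, ← hU]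
    exact Set.mem_union_left _ h
  have adjB : ∀ {u v : V}, s(u, v) ∈ B → G.Adj u v := by
    intro u v h
    rw [← SimpleGraph.mem_edgeSet, ← hU]
    exact Set.mem_union_right _ h
  have hRB : ∀ {e : Sym2 V}, e ∈ R → e ∈ B → False :=
    fun hr hb => Set.disjoint_left.mp hd hr hb
  have hadjRB : ∀ {u v : V}, G.Adj u v → s(u, v) ∈ R ∨ s(u, v) ∈ B := by
    intro u v h
    have : s(u, v) ∈ R ∪ B := by rw [hU]; exact G.mem_edgeSet.mpr h
    exact this
  -- the code function
  set c : V → V → Fin 3 := fun u v =>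
    if G.Adj u v then (if s(u, v) ∈ R then 1 else 2) else 0 with hcdef
  have hcR : ∀ u v : V, s(u, v) ∈ R → c u v = 1 := by
    intro u v h; simp [hcdef, adjR h, h]
  have hcB : ∀ u v : V, s(u, v) ∈ B → c u v = 2 := by
    intro u v h
    have : ¬ s(u, v) ∈ R := fun hr => hRB hr h
    simp [hcdef, adjB h, this]
  have hcN : ∀ u v : V, ¬ G.Adj u v → c u v = 0 := by
    intro u v h; simp [hcdef, h]
  have hR' : ∀ u v : V, c u v = 1 → s(u, v) ∈ R := by
    intro u v h
    by_cases ha : G.Adj u v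
    · by_cases hr : s(u, v) ∈ R
      · exact hr
      · simp [hcdef, ha, hr] at h
    · simp [hcdef, ha] at h
  have hB' : ∀ u v : V, c u v = 2 → s(u, v) ∈ B := by
    intro u v h
    by_cases ha : G.Adj u v
    · by_cases hr : s(u, v) ∈ R
      · simp [hcdef, ha, hr] at h
      · rcases hadjRB ha with h1 | h1
        · exact absurd h1 hr
        · exact h1
    · simp [hcdef, ha] at h
  have hA' : ∀ u v : V, c u v ≠ 0 → G.Adj u v := by
    intro u v h
    by_cases ha : G.Adj u v
    · exact ha
    · simp [hcdef, ha] at h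
  have hA0 : ∀ u v : V, c u v = 0 → ¬ G.Adj u v := by
    intro u v h ha
    by_cases hr : s(u, v) ∈ R <;> simp [hcdef, ha, hr] at h
  -- triangle lemma
  have htri : ∀ u v w : V, c u v ≠ 0 → c v w ≠ 0 → c u w ≠ 0 →
      (c u v = c v w ∧ c v w = c u w) := by
    intro u v w h1 h2 h3
    rcases hNoNM u v w (hA' _ _ h1) (hA' _ _ h2) (hA' _ _ h3) with
      ⟨r1, r2, r3⟩ | ⟨b1, b2, b3⟩
    · rw [hcR _ _ r1, hcR _ _ r2, hcR _ _ r3]; exact ⟨rfl, rfl⟩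
    · rw [hcB _ _ b1, hcB _ _ b2, hcB _ _ b3]; exact ⟨rfl, rfl⟩
  -- intra-seagull codes
  have e1 : c x1 y1 = 1 := hcR _ _ h1R
  have e2 : c y1 z1 = 2 := hcB _ _ h1B
  have e3 : c x2 y2 = 1 := hcR _ _ h2R
  have e4 : c y2 z2 = 2 := hcB _ _ h2B
  -- the count
  have hcnt : (if c x1 x2 = 0 then (0:Nat) else 1) + (if c x1 y2 = 0 then 0 else 1) +
      (if c x1 z2 = 0 then 0 else 1) + (if c y1 x2 = 0 then 0 else 1) +
      (if c y1 y2 = 0 then 0 else 1) + (if c y1 z2 = 0 then 0 else 1) +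
      (if c z1 x2 = 0 then 0 else 1) + (if c z1 y2 = 0 then 0 else 1) +
      (if c z1 z2 = 0 then 0 else 1) = 6 := by
    have conv : ∀ u v : V, (if G.Adj u v then (1:ℕ) else 0) = (if c u v = 0 then 0 else 1) := by
      intro u v
      by_cases h : G.Adj u v
      · by_cases hr : s(u, v) ∈ R <;> simp [hcdef, h, hr]
      · simp [hcdef, h]
    rw [Finset.card_filter, Finset.sum_product] at h6
    rw [Finset.sum_insert (by simp [n11, n12]),
      Finset.sum_insert (by simp [n21, n22]), Finset.sum_insert (by simp [n23]),
      Finset.sum_singleton,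
      Finset.sum_insert (by simp [n13]),
      Finset.sum_insert (by simp [n21, n22]), Finset.sum_insert (by simp [n23]),
      Finset.sum_singleton, Finset.sum_singleton,
      Finset.sum_insert (by simp [n21, n22]), Finset.sum_insert (by simp [n23]),
      Finset.sum_singleton] at h6
    dsimp only at h6
    simp only [conv] at h6
    linarith [h6]
  obtain ⟨ha, hb, hc, hd', he, hf, hg, hh, hi⟩ :=
    brute (c x1 x2) (c x1 y2) (c x1 z2) (c y1 x2) (c y1 y2) (c y1 z2)
      (c z1 x2) (c z1 y2) (c z1 z2) hcnt
      (by intro _ h2 h3; rw [← e1]; exact htri x1 y1 x2 (by rw [e1]; decide) h2 h3)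
      (by intro _ h2 h3; rw [← e1]; exact htri x1 y1 y2 (by rw [e1]; decide) h2 h3)
      (by intro _ h2 h3; rw [← e1]; exact htri x1 y1 z2 (by rw [e1]; decide) h2 h3)
      (by intro h1 _ h3; rw [← e3]; exact htri x1 x2 y2 h1 (by rw [e3]; decide) h3)
      (by intro h1 _ h3; rw [← e4]; exact htri x1 y2 z2 h1 (by rw [e4]; decide) h3)
      (by intro _ h2 h3; rw [← e2]; exact htri y1 z1 x2 (by rw [e2]; decide) h2 h3)
      (by intro _ h2 h3; rw [← e2]; exact htri y1 z1 y2 (by rw [e2]; decide) h2 h3)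
      (by intro _ h2 h3; rw [← e2]; exact htri y1 z1 z2 (by rw [e2]; decide) h2 h3)
      (by intro h1 _ h3; rw [← e3]; exact htri y1 x2 y2 h1 (by rw [e3]; decide) h3)
      (by intro h1 _ h3; rw [← e4]; exact htri y1 y2 z2 h1 (by rw [e4]; decide) h3)
      (by intro h1 _ h3; rw [← e3]; exact htri z1 x2 y2 h1 (by rw [e3]; decide) h3)
      (by intro h1 _ h3; rw [← e4]; exact htri z1 y2 z2 h1 (by rw [e4]; decide) h3)
  -- collected facts
  have P1 : G.Adj x1 y1 := adjR h1R
  have P2 : G.Adj y1 z1 := adjB h1B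
  have P3 : G.Adj x2 y2 := adjR h2R
  have P4 : G.Adj y2 z2 := adjB h2B
  have R1 : s(x1, x2) ∈ R := hR' _ _ ha
  have R2 : s(x1, y2) ∈ R := hR' _ _ hb
  have R3 : s(y1, x2) ∈ R := hR' _ _ hd'
  have B1 : s(y1, z2) ∈ B := hB' _ _ hf
  have B2 : s(z1, y2) ∈ B := hB' _ _ hh
  have B3 : s(z1, z2) ∈ B := hB' _ _ hi
  have P5 : G.Adj x1 x2 := adjR R1
  have P6 : G.Adj x1 y2 := adjR R2
  have P7 : G.Adj y1 x2 := adjR R3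
  have P8 : G.Adj y1 z2 := adjB B1
  have P9 : G.Adj z1 y2 := adjB B2
  have P10 : G.Adj z1 z2 := adjB B3
  have N1 : ¬ G.Adj x1 z2 := hA0 _ _ hc
  have N2 : ¬ G.Adj y1 y2 := hA0 _ _ he
  have N3 : ¬ G.Adj z1 x2 := hA0 _ _ hg
  have N4 : ¬ G.Adj x1 z1 := by
    intro hadj
    rcases hNoNM x1 y1 z1 P1 P2 hadj with ⟨_, hr, _⟩ | ⟨hb', _, _⟩
    · exact hRB hr h1B
    · exact hRB h1R hb'
  have N5 : ¬ G.Adj x2 z2 := by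
    intro hadj
    rcases hNoNM x2 y2 z2 P3 P4 hadj with ⟨_, hr, _⟩ | ⟨hb', _, _⟩
    · exact hRB hr h2B
    · exact hRB h2R hb'
  have N1' : ¬ G.Adj z2 x1 := fun h => N1 h.symm
  have N2' : ¬ G.Adj y2 y1 := fun h => N2 h.symm
  have N3' : ¬ G.Adj x2 z1 := fun h => N3 h.symm
  have N4' : ¬ G.Adj z1 x1 := fun h => N4 h.symm
  have N5' : ¬ G.Adj z2 x2 := fun h => N5 h.symm
  -- R facts, both orientations
  have hr1 : s(y1, x1) ∈ R := by rw [Sym2.eq_swap]; exact h1R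
  have hr2 : s(y2, x2) ∈ R := by rw [Sym2.eq_swap]; exact h2R
  have hr3 : s(x2, x1) ∈ R := by rw [Sym2.eq_swap]; exact R1
  have hr4 : s(y2, x1) ∈ R := by rw [Sym2.eq_swap]; exact R2
  have hr5 : s(x2, y1) ∈ R := by rw [Sym2.eq_swap]; exact R3
  -- non-R facts for blue edges, both orientations
  have hn1 : s(y1, z1) ∉ R := fun hh' => hRB hh' h1B
  have hn1' : s(z1, y1) ∉ R := fun hh' => hRB hh' (by rw [Sym2.eq_swap]; exact h1B)
  have hn2 : s(y2, z2) ∉ R := fun hh' => hRB hh' h2B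
  have hn2' : s(z2, y2) ∉ R := fun hh' => hRB hh' (by rw [Sym2.eq_swap]; exact h2B)
  have hn3 : s(y1, z2) ∉ R := fun hh' => hRB hh' B1
  have hn3' : s(z2, y1) ∉ R := fun hh' => hRB hh' (by rw [Sym2.eq_swap]; exact B1)
  have hn4 : s(z1, y2) ∉ R := fun hh' => hRB hh' B2
  have hn4' : s(y2, z1) ∉ R := fun hh' => hRB hh' (by rw [Sym2.eq_swap]; exact B2)
  have hn5 : s(z1, z2) ∉ R := fun hh' => hRB hh' B3
  have hn5' : s(z2, z1) ∉ R := fun hh' => hRB hh' (by rw [Sym2.eq_swap]; exact B3)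
  -- the map
  set F : V → (Fin 2 ⊕ (Fin 2 ⊕ Fin 2)) := fun v =>
    if v = x1 then Sum.inr (Sum.inl 0) else
    if v = y1 then Sum.inl 0 else
    if v = z1 then Sum.inr (Sum.inr 0) else
    if v = x2 then Sum.inr (Sum.inl 1) else
    if v = y2 then Sum.inl 1 else
    if v = z2 then Sum.inr (Sum.inr 1) else Sum.inl 0 with hFdef
  have F1 : F x1 = Sum.inr (Sum.inl 0) := by simp [hFdef]
  have F2 : F y1 = Sum.inl 0 := by simp [hFdef, n11.symm]
  have F3 : F z1 = Sum.inr (Sum.inr 0) := by simp [hFdef, n12.symm, n13.symm]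
  have F4 : F x2 = Sum.inr (Sum.inl 1) := by
    simp [hFdef, q11.symm, q21.symm, q31.symm]
  have F5 : F y2 = Sum.inl 1 := by
    simp [hFdef, q12.symm, q22.symm, q32.symm, n21.symm]
  have F6 : F z2 = Sum.inr (Sum.inr 1) := by
    simp [hFdef, q13.symm, q23.symm, q33.symm, n22.symm, n23.symm]
  refine ⟨F, ?_, ?_, Or.inl ?_⟩
  · intro u hu v hv huv
    simp only [Finset.coe_insert, Set.mem_insert_iff, Finset.coe_singleton,
      Set.mem_singleton_iff] at hu hv
    rcases hu with rfl | rfl | rfl | rfl | rfl | rfl <;>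
      rcases hv with rfl | rfl | rfl | rfl | rfl | rfl <;>
      first
        | rfl
        | (simp only [F1, F2, F3, F4, F5, F6] at huv; exact absurd huv (by decide))
  · intro u hu v hv
    simp only [Finset.mem_insert, Finset.mem_singleton] at hu hv
    rcases hu with rfl | rfl | rfl | rfl | rfl | rfl <;>
      rcases hv with rfl | rfl | rfl | rfl | rfl | rfl <;>
      simp [F1, F2, F3, F4, F5, F6, HGraph, SimpleGraph.fromRel_adj,
        P1, P2, P3, P4, P5, P6, P7, P8, P9, P10,
        P1.symm, P2.symm, P3.symm, P4.symm, P5.symm, P6.symm, P7.symm, P8.symm,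
        P9.symm, P10.symm, N1, N2, N3, N4, N5, N1', N2', N3', N4', N5',
        SimpleGraph.irrefl]
  · intro u hu v hv hadj
    simp only [Finset.mem_insert, Finset.mem_singleton] at hu hv
    rcases hu with rfl | rfl | rfl | rfl | rfl | rfl <;>
      rcases hv with rfl | rfl | rfl | rfl | rfl | rfl <;>
      first
      | exact absurd hadj (G.irrefl)
      | exact absurd hadj N1 | exact absurd hadj N2 | exact absurd hadj N3
      | exact absurd hadj N4 | exact absurd hadj N5 | exact absurd hadj N1'
      | exact absurd hadj N2' | exact absurd hadj N3' | exact absurd hadj N4'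
      | exact absurd hadj N5'
      | simp [F1, F2, F3, F4, F5, F6, inX1,
          h1R, h2R, R1, R2, R3, hr1, hr2, hr3, hr4, hr5,
          hn1, hn1', hn2, hn2', hn3, hn3', hn4, hn4', hn5, hn5']
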